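/- arXiv:2312.10910 — 5 statements merged into one kernel-verified Lean document; each statement's English description precedes it below -/
import Mathlib

section
/- For all positive integers k and h, the k-th positive element γ_k(h) of the greedy B_h-set satisfies γ_k(h) ≥ (1/h)·(binom(k+h, k) − 1). -/
/-- A set `A` of nonnegative integers is a `B_h`-set if every solution to
`a_1 + ... + a_h = b_1 + ... + b_h` with all `a_i, b_i ∈ A` has
`{a_1, ..., a_h} = {b_1, ..., b_h}` as multisets. -/
def IsBhSet (h : ℕ) (A : Set ℕ) : Prop :=
  ∀ a b : Fin h → ℕ, (∀ i, a i ∈ A) → (∀ i, b i ∈ A) →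
    (∑ i, a i) = (∑ i, b i) →
    Multiset.map a Finset.univ.val = Multiset.map b Finset.univ.val

/-- Auxiliary construction of the greedy `B_h`-set: `greedyAux h k` is the pair
consisting of the `k`-th element `γ_k(h)` of the greedy `B_h`-set together with
the finite set `{γ_0(h), ..., γ_k(h)}`.  We have `γ_0(h) = 0`, `γ_1(h) = 1`, and
for `k ≥ 1`, `γ_{k+1}(h)` is the smallest integer greater than `γ_k(h)` such
that `{γ_0(h), ..., γ_k(h), γ_{k+1}(h)}` is a `B_h`-set. -/
noncomputable def greedyAux (h : ℕ) : ℕ → ℕ × Finset ℕ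
  | 0 => (0, {0})
  | (k + 1) =>
    let p := greedyAux h k
    let g := if k = 0 then 1
      else sInf {x : ℕ | p.1 < x ∧ IsBhSet h ((insert x p.2 : Finset ℕ) : Set ℕ)}
    (g, insert g p.2)

/-- `greedy h k` is the `k`-th element `γ_k(h)` of the greedy `B_h`-set. -/
noncomputable def greedy (h k : ℕ) : ℕ := (greedyAux h k).1

/-! The set `{γ_0(h), …, γ_k(h)}` is a `B_h`-set with `k + 1` elements and maximum `γ_k(h)`, so
its `C(k + h, h)` sums of `h`-element multisets are pairwise distinct integers in
`[0, h γ_k(h)]`. The greedy step never gets stuck: any `x > h m` can be added to a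
`B_h`-set bounded by `m`, since the number of copies of `x` in an `h`-fold sum is then the
quotient of the sum by `x`. -/

open Multiset

theorem Multiset.exists_fin_map_eq {α : Type*} {s : Multiset α} {n : ℕ} (hs : card s = n) :
    ∃ a : Fin n → α, Finset.univ.val.map a = s := by
  subst hs
  refine ⟨fun i => s.toList.get (i.cast s.length_toList.symm), ?_⟩
  rw [Fin.univ_val_map, ← List.ofFn_congr s.length_toList, List.ofFn_get, coe_toList]

theorem isBhSet_iff {h : ℕ} {A : Set ℕ} : IsBhSet h A ↔
    ∀ s t : Multiset ℕ, card s = h → card t = h → (∀ x ∈ s, x ∈ A) → (∀ x ∈ t, x ∈ A) →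
      s.sum = t.sum → s = t := by
  refine ⟨fun hA s t hs ht hsA htA hst => ?_, fun hA a b ha hb hab => ?_⟩
  · obtain ⟨a, rfl⟩ := exists_fin_map_eq hs
    obtain ⟨b, rfl⟩ := exists_fin_map_eq ht
    simp only [mem_map, Finset.mem_val, Finset.mem_univ, true_and, forall_exists_index,
      forall_apply_eq_imp_iff] at hsA htA
    exact hA a b hsA htA hst
  · exact hA _ _ (by simp) (by simp) (by simpa using ha) (by simpa using hb) hab

theorem isBhSet_singleton (h c : ℕ) : IsBhSet h {c} := by
  intro a b ha hb _
  obtain rfl : a = b := funext fun i => (ha i).trans (hb i).symm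
  rfl

theorem IsBhSet.of_le {h h' a : ℕ} {A : Set ℕ} (hA : IsBhSet h A) (ha : a ∈ A) (hh' : h' ≤ h) :
    IsBhSet h' A := by
  rw [isBhSet_iff] at hA ⊢
  intro s t hs ht hsA htA hst
  have hpad : ∀ u : Multiset ℕ, (∀ y ∈ u, y ∈ A) → ∀ y ∈ u + replicate (h - h') a, y ∈ A := by
    intro u huA y hy
    rcases mem_add.1 hy with hy | hy
    · exact huA y hy
    · rwa [eq_of_mem_replicate hy]
  refine add_right_cancel (hA _ _ ?_ ?_ (hpad s hsA) (hpad t htA) (by simp [hst]))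
  · simp [hs, hh']
  · simp [ht, hh']

theorem IsBhSet.insert_of_mul_lt {h m x a : ℕ} {A : Set ℕ} (hA : IsBhSet h A) (ha : a ∈ A)
    (hm : m ∈ upperBounds A) (hx : h * m < x) : IsBhSet h (insert x A) := by
  -- An `h`-multiset from `insert x A` is some copies of `x` plus a rest from `A` with sum
  -- `≤ h * m < x`, so its sum determines the number of copies and the sum of the rest.
  have split : ∀ u : Multiset ℕ, card u = h → (∀ y ∈ u, y ∈ insert x A) →
      (∀ y ∈ u.filter (· ≠ x), y ∈ A) ∧ card (u.filter (· ≠ x)) + u.count x = h ∧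
        u.sum / x = u.count x ∧ u.sum % x = (u.filter (· ≠ x)).sum := by
    intro u hu huA
    have hrest : ∀ y ∈ u.filter (· ≠ x), y ∈ A := fun y hy => by
      rw [mem_filter] at hy
      exact (huA y hy.1).resolve_left hy.2
    have hdecomp : replicate (u.count x) x + u.filter (· ≠ x) = u := by
      rw [← filter_eq', filter_add_not]
    have hcard : card (u.filter (· ≠ x)) + u.count x = h := by
      have := congrArg card hdecomp
      rw [card_add, card_replicate] at this
      omega
    have hlt : (u.filter (· ≠ x)).sum < x := calc
      _ ≤ card (u.filter (· ≠ x)) • m := sum_le_card_nsmul _ _ fun y hy => hm (hrest y hy)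
      _ ≤ h * m := by rw [smul_eq_mul]; exact Nat.mul_le_mul_right _ (by omega)
      _ < x := hx
    refine ⟨hrest, hcard, (Nat.div_mod_unique (by omega)).2 ⟨?_, hlt⟩⟩
    have := congrArg sum hdecomp
    rw [sum_add, sum_replicate, smul_eq_mul] at this
    rw [← this]
    ring
  rw [isBhSet_iff]
  intro s t hs ht hsA htA hst
  obtain ⟨hsA', hscard, hsq, hsr⟩ := split s hs hsA
  obtain ⟨htA', htcard, htq, htr⟩ := split t ht htA
  have hcount : s.count x = t.count x := by rw [← hsq, ← htq, hst]
  have hrest : s.filter (· ≠ x) = t.filter (· ≠ x) :=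
    isBhSet_iff.1 (hA.of_le ha (by omega : card (s.filter (· ≠ x)) ≤ h)) _ _ rfl (by omega)
      hsA' htA' (by rw [← hsr, ← htr, hst])
  rw [← filter_add_not (· = x) s, ← filter_add_not (· = x) t, filter_eq', filter_eq', hcount,
    hrest]

theorem IsBhSet.choose_le_mul_add_one {h m : ℕ} {F : Finset ℕ} (hF : IsBhSet h F)
    (hm : m ∈ upperBounds (F : Set ℕ)) : (F.card + h - 1).choose h ≤ h * m + 1 := by
  let sumOf : Sym F h → ℕ := fun s => ((s : Multiset F).map Subtype.val).sum
  have hmem : ∀ s : Sym F h, ∀ y ∈ (s : Multiset F).map Subtype.val, y ∈ (F : Set ℕ) :=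
    fun s y hy => by
      obtain ⟨z, -, rfl⟩ := mem_map.1 hy
      exact z.2
  have hsumOf : ∀ s, sumOf s < h * m + 1 := fun s => by
    have := sum_le_card_nsmul _ m fun y hy => hm (hmem s y hy)
    rw [card_map, Sym.card_coe, smul_eq_mul] at this
    exact Nat.lt_succ_of_le this
  have hinj : Function.Injective sumOf := fun s t hst =>
    Sym.coe_injective (map_injective Subtype.val_injective
      (isBhSet_iff.1 hF _ _ (by simp) (by simp) (hmem s) (hmem t) hst))
  simpa [Sym.card_sym_eq_choose] using Fintype.card_le_of_injective
    (fun s => (⟨sumOf s, hsumOf s⟩ : Fin (h * m + 1))) fun s t hst => hinj (Fin.val_eq_of_eq hst)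

theorem greedyAux_spec (h k : ℕ) :
    IsBhSet h ((greedyAux h k).2 : Set ℕ) ∧ (greedyAux h k).2.card = k + 1 ∧
      IsGreatest ((greedyAux h k).2 : Set ℕ) (greedy h k) := by
  induction k with
  | zero => simpa [greedyAux, greedy] using isBhSet_singleton h 0
  | succ k ih =>
    obtain ⟨hbh, hcard, hmax⟩ := ih
    set F := (greedyAux h k).2
    suffices ∃ x, greedy h k < x ∧ IsBhSet h ((insert x F : Finset ℕ) : Set ℕ) ∧
        greedyAux h (k + 1) = (x, insert x F) by
      obtain ⟨x, hlt, hx, he⟩ := this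
      have hxF : x ∉ F := fun hx' => (hmax.2 hx').not_gt hlt
      rw [greedy, he]
      refine ⟨hx, by rw [Finset.card_insert_of_notMem hxF, hcard], ?_⟩
      simpa [max_eq_left hlt.le] using hmax.insert x
    rcases eq_or_ne k 0 with rfl | hk
    · refine ⟨1, by simp [greedy, greedyAux], ?_, rfl⟩
      rw [Finset.coe_insert]
      exact hbh.insert_of_mul_lt hmax.1 hmax.2 (by simp [greedy, greedyAux])
    · have hT : (h + 1) * greedy h k + 1 ∈
          {x | greedy h k < x ∧ IsBhSet h ((insert x F : Finset ℕ) : Set ℕ)} := by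
        refine ⟨by nlinarith, ?_⟩
        rw [Finset.coe_insert]
        exact hbh.insert_of_mul_lt hmax.1 hmax.2 (by nlinarith)
      obtain ⟨hlt, hbh'⟩ := Nat.sInf_mem ⟨_, hT⟩
      exact ⟨_, hlt, hbh', by rw [greedyAux, if_neg hk]; rfl⟩

theorem stmt_3_general (h k : ℕ) :
    (greedy h k : ℚ) ≥ (((k + h).choose k : ℚ) - 1) / h := by
  obtain ⟨hbh, hcard, hmax⟩ := greedyAux_spec h k
  have hcount := hbh.choose_le_mul_add_one hmax.2
  rw [hcard, show k + 1 + h - 1 = k + h by omega, ← Nat.choose_symm_add] at hcount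
  refine div_le_of_le_mul₀ (Nat.cast_nonneg _) (Nat.cast_nonneg _) ?_
  rw [sub_le_iff_le_add, mul_comm]
  exact_mod_cast hcount

theorem stmt_3 (h k : ℕ) (hh : 1 ≤ h) (hk : 1 ≤ k) :
    (greedy h k : ℚ) ≥ (((k + h).choose k : ℚ) - 1) / h :=
  stmt_3_general h k
end

section
/- For all positive integers h and k, the elements of the greedy B_h-set satisfy γ_{k+1}(h) ≤ h·γ_k(h) + 1. -/
-- counting auxiliary
lemma count_aux (h : ℕ) (a : Fin h → ℕ) (x y : ℕ) (hx : x ≠ 0) (hy : y ≠ x) :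
    Multiset.count y (Multiset.map (fun i => if a i = x then 0 else a i) Finset.univ.val)
      = Multiset.count y (Multiset.map a Finset.univ.val)
        + (if y = 0 then Multiset.count x (Multiset.map a Finset.univ.val) else 0) := by
  classical
  rw [Multiset.count_map, Multiset.count_map, Multiset.count_map]
  rw [← Finset.filter_val, ← Finset.filter_val, ← Finset.filter_val]
  simp only [← Finset.card_def]
  by_cases h0 : y = 0
  · subst h0
    rw [if_pos rfl]
    have : Finset.univ.filter (fun i => (0:ℕ) = if a i = x then 0 else a i)
        = Finset.univ.filter (fun i => (0:ℕ) = a i ∨ x = a i) := by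
      apply Finset.filter_congr
      intro i _
      by_cases hi : a i = x
      · simp [hi, eq_comm, hx.symm]
      · simp only [if_neg hi]
        constructor
        · exact fun h' => Or.inl h'
        · rintro (h' | h')
          · exact h'
          · exact absurd h'.symm hi
    rw [this, Finset.filter_or, Finset.card_union_of_disjoint]
    rw [Finset.disjoint_filter]
    intro i _ h1 h2
    exact hx (by omega)
  · rw [if_neg h0, Nat.add_zero]
    congr 1
    apply Finset.filter_congr
    intro i _
    by_cases hi : a i = x <;> simp [hi, h0, hy]

lemma insert_isBhSet (h M x : ℕ) (A : Finset ℕ) (h0 : (0:ℕ) ∈ A)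
    (hA : ∀ y ∈ A, y ≤ M) (hx : h * M < x) (hB : IsBhSet h (A : Set ℕ)) :
    IsBhSet h ((insert x A : Finset ℕ) : Set ℕ) := by
  classical
  have hx0 : x ≠ 0 := by omega
  intro a b ha hb hsum
  set a' : Fin h → ℕ := fun i => if a i = x then 0 else a i with ha'def
  set b' : Fin h → ℕ := fun i => if b i = x then 0 else b i with hb'def
  have ha' : ∀ i, a' i ∈ A := by
    intro i
    have := ha i
    simp only [Finset.coe_insert, Set.mem_insert_iff, Finset.mem_coe] at this
    by_cases hi : a i = x
    · simpa [ha'def, hi] using h0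
    · simpa [ha'def, hi] using this.resolve_left hi
  have hb' : ∀ i, b' i ∈ A := by
    intro i
    have := hb i
    simp only [Finset.coe_insert, Set.mem_insert_iff, Finset.mem_coe] at this
    by_cases hi : b i = x
    · simpa [hb'def, hi] using h0
    · simpa [hb'def, hi] using this.resolve_left hi
  set ma := (Finset.univ.filter (fun i => x = a i)).card with hma
  set nb := (Finset.univ.filter (fun i => x = b i)).card with hnb
  have hsa : ∑ i, a i = x * ma + ∑ i, a' i := by
    have : ∀ i : Fin h, a i = (if x = a i then x else 0) + a' i := by
      intro i
      by_cases hi : a i = x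
      · simp [ha'def, hi]
      · rw [if_neg (fun h' => hi h'.symm)]
        simp [ha'def, hi]
    rw [Finset.sum_congr rfl (fun i _ => this i), Finset.sum_add_distrib,
      Finset.sum_ite, Finset.sum_const, Finset.sum_const_zero]
    simp [hma, mul_comm]
  have hsb : ∑ i, b i = x * nb + ∑ i, b' i := by
    have : ∀ i : Fin h, b i = (if x = b i then x else 0) + b' i := by
      intro i
      by_cases hi : b i = x
      · simp [hb'def, hi]
      · rw [if_neg (fun h' => hi h'.symm)]
        simp [hb'def, hi]
    rw [Finset.sum_congr rfl (fun i _ => this i), Finset.sum_add_distrib,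
      Finset.sum_ite, Finset.sum_const, Finset.sum_const_zero]
    simp [hnb, mul_comm]
  have hsa' : ∑ i, a' i ≤ h * M := by
    calc ∑ i, a' i ≤ ∑ _i : Fin h, M := Finset.sum_le_sum (fun i _ => hA _ (ha' i))
    _ = h * M := by simp [Finset.sum_const, Finset.card_univ]
  have hsb' : ∑ i, b' i ≤ h * M := by
    calc ∑ i, b' i ≤ ∑ _i : Fin h, M := Finset.sum_le_sum (fun i _ => hA _ (hb' i))
    _ = h * M := by simp [Finset.sum_const, Finset.card_univ]
  have hmn : ma = nb := by
    have h1 : x * ma < x * (nb + 1) := by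
      calc x * ma ≤ x * ma + ∑ i, a' i := Nat.le_add_right _ _
      _ = x * nb + ∑ i, b' i := by rw [← hsa, ← hsb, hsum]
      _ < x * (nb + 1) := by nlinarith
    have h2 : x * nb < x * (ma + 1) := by
      calc x * nb ≤ x * nb + ∑ i, b' i := Nat.le_add_right _ _
      _ = x * ma + ∑ i, a' i := by rw [← hsa, ← hsb, hsum]
      _ < x * (ma + 1) := by nlinarith
    have := Nat.lt_of_mul_lt_mul_left h1
    have := Nat.lt_of_mul_lt_mul_left h2
    omega
  have hsum' : ∑ i, a' i = ∑ i, b' i := by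
    rw [hsa, hsb, hmn] at hsum
    omega
  have hmaps := hB a' b' (fun i => ha' i) (fun i => hb' i) hsum'
  -- now conclude via counts
  ext y
  by_cases hy : y = x
  · subst hy
    rw [Multiset.count_map, Multiset.count_map, ← Finset.filter_val, ← Finset.filter_val]
    simp only [← Finset.card_def]
    exact hmn
  · have hca := count_aux h a x y hx0 hy
    have hcb := count_aux h b x y hx0 hy
    have hcount : Multiset.count y (Multiset.map a' Finset.univ.val)
        = Multiset.count y (Multiset.map b' Finset.univ.val) := by rw [hmaps]
    have hmx : Multiset.count x (Multiset.map a Finset.univ.val)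
        = Multiset.count x (Multiset.map b Finset.univ.val) := by
      rw [Multiset.count_map, Multiset.count_map, ← Finset.filter_val, ← Finset.filter_val]
      simp only [← Finset.card_def]
      exact hmn
    rw [hca, hcb, hmx] at hcount
    omega

lemma greedy_ind (h : ℕ) (hh : 1 ≤ h) (k : ℕ) :
    (0:ℕ) ∈ (greedyAux h k).2 ∧ (∀ y ∈ (greedyAux h k).2, y ≤ (greedyAux h k).1) ∧
      IsBhSet h ((greedyAux h k).2 : Set ℕ) := by
  induction k with
  | zero =>
    refine ⟨by simp [greedyAux], by simp [greedyAux], ?_⟩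
    intro a b ha hb _
    have : a = b := by
      funext i
      have h1 := ha i
      have h2 := hb i
      simp only [greedyAux, Finset.coe_singleton, Set.mem_singleton_iff] at h1 h2
      rw [h1, h2]
    rw [this]
  | succ k ih =>
    obtain ⟨ih0, ihb, ihB⟩ := ih
    by_cases hk0 : k = 0
    · subst hk0
      have hA : (greedyAux h 1).2 = insert 1 (greedyAux h 0).2 := by simp [greedyAux]
      have hg : (greedyAux h 1).1 = 1 := by simp [greedyAux]
      refine ⟨?_, ?_, ?_⟩
      · rw [hA]; exact Finset.mem_insert_of_mem ih0
      · rw [hA, hg]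
        intro y hy
        rcases Finset.mem_insert.1 hy with hy | hy
        · omega
        · have := ihb y hy
          simp only [greedyAux] at this
          omega
      · rw [hA]
        exact insert_isBhSet h (greedyAux h 0).1 1 (greedyAux h 0).2 ih0 ihb
          (by simp [greedyAux]) ihB
    · set S := {x : ℕ | (greedyAux h k).1 < x ∧
        IsBhSet h ((insert x (greedyAux h k).2 : Finset ℕ) : Set ℕ)} with hS
      have hmem : h * (greedyAux h k).1 + 1 ∈ S := by
        constructor
        · have : (greedyAux h k).1 ≤ h * (greedyAux h k).1 := Nat.le_mul_of_pos_left _ hh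
          omega
        · exact insert_isBhSet h (greedyAux h k).1 _ (greedyAux h k).2 ih0 ihb
            (by omega) ihB
      have hg : (greedyAux h (k+1)).1 = sInf S := by
        simp [greedyAux, hk0, hS]
      have hA : (greedyAux h (k+1)).2 = insert (sInf S) (greedyAux h k).2 := by
        simp [greedyAux, hk0, hS]
      have hInf := Nat.sInf_mem (Set.nonempty_of_mem hmem)
      rw [hS] at hInf
      obtain ⟨hlt, hB⟩ := hInf
      rw [← hS] at hlt hB
      refine ⟨?_, ?_, ?_⟩
      · rw [hA]; exact Finset.mem_insert_of_mem ih0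
      · rw [hA, hg]
        intro y hy
        rcases Finset.mem_insert.1 hy with hy | hy
        · omega
        · have := ihb y hy
          omega
      · rw [hA]
        exact hB

theorem stmt_6 (h k : ℕ) (hh : 1 ≤ h) (hk : 1 ≤ k) :
    greedy h (k + 1) ≤ h * greedy h k + 1 := by
  obtain ⟨ih0, ihb, ihB⟩ := greedy_ind h hh k
  have hk0 : k ≠ 0 := by omega
  set S := {x : ℕ | (greedyAux h k).1 < x ∧
      IsBhSet h ((insert x (greedyAux h k).2 : Finset ℕ) : Set ℕ)} with hS
  have hmem : h * (greedyAux h k).1 + 1 ∈ S := by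
    constructor
    · have : (greedyAux h k).1 ≤ h * (greedyAux h k).1 := Nat.le_mul_of_pos_left _ hh
      omega
    · exact insert_isBhSet h (greedyAux h k).1 _ (greedyAux h k).2 ih0 ihb (by omega) ihB
  have hg : greedy h (k+1) = sInf S := by
    simp [greedy, greedyAux, hk0, hS]
  rw [hg]
  exact Nat.sInf_le hmem
end

section
/- For all positive integers k, the k-th positive element of the greedy B_2-set satisfies γ_k(2) ≤ (1/2)·k^3 + (1/2)·k. -/
/-!
Write `S_k = {γ_0, …, γ_k}`. An integer `x` with `γ_j < x < γ_{j+1}` was rejected by the greedy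
algorithm, so `S_j ∪ {x}` is not a Sidon set; as `x` exceeds every element of `S_j`, the offending
relation has the form `x + a = b + c` with `a < b` and `a, b, c ∈ S_j`. Hence every `x ≤ γ_k` outside
`S_k` is of the form `b + c - a` for one of the `C(k, 2) · k` triples from `S_{k-1}` with `a < b`,
so `γ_k + 1 ≤ (k + 1) + C(k, 2) · k`, and `k + C(k, 2) · k ≤ (k³ + k) / 2`.
-/

open Finset

def IsSidon {M : Type*} [Add M] (A : Set M) : Prop :=
  ∀ a ∈ A, ∀ b ∈ A, ∀ c ∈ A, ∀ d ∈ A, a + b = c + d → (a = c ∧ b = d) ∨ (a = d ∧ b = c)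

theorem isSidon_singleton {M : Type*} [Add M] (n : M) : IsSidon {n} := by
  rintro a rfl b rfl c rfl d rfl -
  exact Or.inl ⟨rfl, rfl⟩

theorem Multiset.pair_eq_pair_iff {α : Type*} {p q r s : α} :
    ({p, q} : Multiset α) = {r, s} ↔ (p = r ∧ q = s) ∨ (p = s ∧ q = r) := by
  simp only [Multiset.insert_eq_cons, Multiset.cons_eq_cons, Multiset.singleton_inj,
    Multiset.singleton_eq_cons_iff, exists_eq_right_right, and_true]
  grind

theorem Fin.univ_val_map_two {α : Type*} (a : Fin 2 → α) :
    Multiset.map a univ.val = {a 0, a 1} := by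
  simp only [Fin.univ_val_map, List.ofFn_succ, Fin.succ_zero_eq_one, List.ofFn_zero]
  rfl

theorem isBhSet_two_iff_isSidon (A : Set ℕ) : IsBhSet 2 A ↔ IsSidon A := by
  simp only [IsBhSet, Fin.univ_val_map_two, Multiset.pair_eq_pair_iff, Fin.sum_univ_two]
  constructor
  · intro h a ha b hb c hc d hd
    exact h ![a, b] ![c, d] (Fin.forall_fin_two.2 ⟨ha, hb⟩) (Fin.forall_fin_two.2 ⟨hc, hd⟩)
  · intro h a b ha hb
    exact h _ (ha 0) _ (ha 1) _ (hb 0) _ (hb 1)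

theorem IsSidon.insert_of_two_mul_lt {A : Set ℕ} {g x : ℕ} (hA : IsSidon A)
    (hle : ∀ y ∈ A, y ≤ g) (hx : 2 * g < x) : IsSidon (insert x A) := by
  have mem : ∀ y ∈ insert x A, y = x ∨ y ∈ A ∧ y ≤ g :=
    fun y hy => hy.imp_right fun hy => ⟨hy, hle y hy⟩
  intro a ha b hb c hc d hd hsum
  rcases mem a ha with rfl | ⟨ha, ha'⟩ <;> rcases mem b hb with rfl | ⟨hb, hb'⟩ <;>
    rcases mem c hc with rfl | ⟨hc, hc'⟩ <;> rcases mem d hd with rfl | ⟨hd, hd'⟩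
  all_goals first
    | exact hA a ha b hb c hc d hd hsum
    | omega

theorem IsSidon.exists_add_eq_add_of_not_isSidon_insert {A : Set ℕ} {x : ℕ} (hA : IsSidon A)
    (hlt : ∀ y ∈ A, y < x) (hx : ¬ IsSidon (insert x A)) :
    ∃ a ∈ A, ∃ b ∈ A, ∃ c ∈ A, a < b ∧ x + a = b + c := by
  have mem : ∀ y ∈ insert x A, y = x ∨ y ∈ A ∧ y < x :=
    fun y hy => hy.imp_right fun hy => ⟨hy, hlt y hy⟩
  suffices ∃ a ∈ A, ∃ b ∈ A, ∃ c ∈ A, x + a = b + c by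
    obtain ⟨a, ha, b, hb, c, hc, h⟩ := this
    exact ⟨a, ha, b, hb, c, hc, by have := hlt c hc; omega, h⟩
  simp only [IsSidon, not_forall] at hx
  -- `x` exceeds every element of `A`, so a nontrivial relation uses it exactly once.
  obtain ⟨p, hp, q, hq, r, hr, s, hs, hsum, htriv⟩ := hx
  rcases mem p hp with rfl | ⟨hpA, hp'⟩ <;> rcases mem q hq with rfl | ⟨hqA, hq'⟩ <;>
    rcases mem r hr with rfl | ⟨hrA, hr'⟩ <;> rcases mem s hs with rfl | ⟨hsA, hs'⟩
  all_goals first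
    | exact absurd (hA p hpA q hqA r hrA s hsA hsum) htriv
    | (exfalso; omega)
    | exact ⟨q, hqA, r, hrA, s, hsA, hsum⟩
    | exact ⟨p, hpA, r, hrA, s, hsA, by omega⟩
    | exact ⟨s, hsA, p, hpA, q, hqA, by omega⟩
    | exact ⟨r, hrA, p, hpA, q, hqA, by omega⟩

theorem exists_between_succ_of_forall_ne {α : Type*} [LinearOrder α] (f : ℕ → α) {x : α}
    {K : ℕ} (h0 : f 0 ≤ x) (hK : x ≤ f K) (hx : ∀ j ≤ K, f j ≠ x) :
    ∃ j < K, f j < x ∧ x < f (j + 1) := by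
  induction K with
  | zero => exact absurd (le_antisymm h0 hK) (hx 0 le_rfl)
  | succ K ih =>
    rcases le_or_gt x (f K) with hxK | hxK
    · obtain ⟨j, hj, hjx⟩ := ih hxK fun j hj => hx j (by omega)
      exact ⟨j, by omega, hjx⟩
    · exact ⟨K, by omega, hxK, lt_of_le_of_ne hK (hx (K + 1) le_rfl).symm⟩

noncomputable def greedySet (h k : ℕ) : Finset ℕ := (greedyAux h k).2

theorem greedy_zero (h : ℕ) : greedy h 0 = 0 := rfl

theorem greedy_one (h : ℕ) : greedy h 1 = 1 := rfl

theorem greedySet_zero (h : ℕ) : greedySet h 0 = {0} := rfl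

theorem greedySet_succ (h k : ℕ) :
    greedySet h (k + 1) = insert (greedy h (k + 1)) (greedySet h k) := rfl

theorem greedy_succ (h : ℕ) {k : ℕ} (hk : k ≠ 0) :
    greedy h (k + 1) =
      sInf {x | greedy h k < x ∧ IsBhSet h ↑(insert x (greedySet h k))} := by
  simp [greedy, greedyAux, hk, greedySet]

theorem greedySet_eq_image (h k : ℕ) : greedySet h k = (range (k + 1)).image (greedy h) := by
  induction k with
  | zero => rfl
  | succ k ih => rw [greedySet_succ, ih, range_add_one (n := k + 1), image_insert]

theorem greedySet_mono (h : ℕ) : Monotone (greedySet h) :=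
  monotone_nat_of_le_succ fun k => by rw [greedySet_succ]; exact subset_insert _ _

theorem greedy_two_lt_succ_and_isSidon_insert {k : ℕ} (hk : k ≠ 0)
    (hS : IsSidon (greedySet 2 k : Set ℕ)) (hle : ∀ y ∈ greedySet 2 k, y ≤ greedy 2 k) :
    greedy 2 k < greedy 2 (k + 1) ∧ IsSidon (insert (greedy 2 (k + 1)) ↑(greedySet 2 k)) := by
  have hne : {x | greedy 2 k < x ∧ IsBhSet 2 ↑(insert x (greedySet 2 k))}.Nonempty := by
    refine ⟨2 * greedy 2 k + 1, by omega, ?_⟩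
    rw [isBhSet_two_iff_isSidon, coe_insert]
    exact hS.insert_of_two_mul_lt hle (by omega)
  have hmem := Nat.sInf_mem hne
  rw [← greedy_succ 2 hk, Set.mem_ofPred_eq, isBhSet_two_iff_isSidon, coe_insert] at hmem
  exact hmem

theorem isSidon_greedySet_two_and_le_and_lt_succ (k : ℕ) :
    IsSidon (greedySet 2 k : Set ℕ) ∧ (∀ y ∈ greedySet 2 k, y ≤ greedy 2 k) ∧
      greedy 2 k < greedy 2 (k + 1) := by
  induction k with
  | zero =>
    refine ⟨?_, fun y hy => ?_, Nat.one_pos⟩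
    · rw [greedySet_zero, coe_singleton]
      exact isSidon_singleton 0
    · rw [greedySet_zero, mem_singleton] at hy
      exact hy.le
  | succ k ih =>
    obtain ⟨hS, hle, hlt⟩ := ih
    have hS' : IsSidon (greedySet 2 (k + 1) : Set ℕ) := by
      rw [greedySet_succ, coe_insert]
      rcases eq_or_ne k 0 with rfl | hk
      · exact hS.insert_of_two_mul_lt hle Nat.one_pos
      · exact (greedy_two_lt_succ_and_isSidon_insert hk hS hle).2
    have hle' : ∀ y ∈ greedySet 2 (k + 1), y ≤ greedy 2 (k + 1) := by
      intro y hy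
      rw [greedySet_succ, mem_insert] at hy
      rcases hy with rfl | hy
      · exact le_rfl
      · exact (hle y hy).trans hlt.le
    exact ⟨hS', hle', (greedy_two_lt_succ_and_isSidon_insert k.succ_ne_zero hS' hle').1⟩

theorem isSidon_greedySet_two (k : ℕ) : IsSidon (greedySet 2 k : Set ℕ) :=
  (isSidon_greedySet_two_and_le_and_lt_succ k).1

theorem le_greedy_two_of_mem_greedySet {k y : ℕ} (hy : y ∈ greedySet 2 k) : y ≤ greedy 2 k :=
  (isSidon_greedySet_two_and_le_and_lt_succ k).2.1 y hy

theorem greedy_two_strictMono : StrictMono (greedy 2) :=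
  strictMono_nat_of_lt_succ fun k => (isSidon_greedySet_two_and_le_and_lt_succ k).2.2

theorem card_greedySet_two (k : ℕ) : #(greedySet 2 k) = k + 1 := by
  rw [greedySet_eq_image, card_image_of_injective _ greedy_two_strictMono.injective, card_range]

theorem not_isSidon_insert_greedySet_two {j x : ℕ} (h1 : greedy 2 j < x)
    (h2 : x < greedy 2 (j + 1)) : ¬ IsSidon (insert x ↑(greedySet 2 j)) := by
  intro hS
  rcases eq_or_ne j 0 with rfl | hj
  · rw [greedy_zero, zero_add, greedy_one] at *
    omega
  · have hmem : x ∈ {x | greedy 2 j < x ∧ IsBhSet 2 ↑(insert x (greedySet 2 j))} := by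
      rw [Set.mem_ofPred_eq, isBhSet_two_iff_isSidon, coe_insert]
      exact ⟨h1, hS⟩
    have := Nat.sInf_le hmem
    rw [← greedy_succ 2 hj] at this
    omega

theorem exists_add_eq_add_of_notMem_greedySet_two {m x : ℕ} (hx : x ≤ greedy 2 (m + 1))
    (hxS : x ∉ greedySet 2 (m + 1)) :
    ∃ a ∈ greedySet 2 m, ∃ b ∈ greedySet 2 m, ∃ c ∈ greedySet 2 m, a < b ∧ x + a = b + c := by
  have hne : ∀ j ≤ m + 1, greedy 2 j ≠ x := by
    rintro j hj rfl
    rw [greedySet_eq_image] at hxS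
    exact hxS (mem_image_of_mem _ (mem_range.2 (by omega)))
  obtain ⟨j, hjm, hj, hj'⟩ := exists_between_succ_of_forall_ne (greedy 2) (Nat.zero_le x) hx hne
  obtain ⟨a, ha, b, hb, c, hc, hab, h⟩ :=
    (isSidon_greedySet_two j).exists_add_eq_add_of_not_isSidon_insert
      (fun y hy => (le_greedy_two_of_mem_greedySet hy).trans_lt hj)
      (not_isSidon_insert_greedySet_two hj hj')
  have hsub := greedySet_mono 2 (show j ≤ m by omega)
  exact ⟨a, hsub ha, b, hsub hb, c, hsub hc, hab, h⟩

theorem greedy_two_succ_le (m : ℕ) :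
    greedy 2 (m + 1) ≤ (m + 1) + (m + 1).choose 2 * (m + 1) := by
  set S := greedySet 2 m
  set T := {p ∈ S ×ˢ S | p.1 < p.2} ×ˢ S
  have hcover : Iic (greedy 2 (m + 1)) ⊆
      greedySet 2 (m + 1) ∪ T.image fun t => t.1.2 + t.2 - t.1.1 := by
    intro x hx
    rw [mem_union, or_iff_not_imp_left]
    intro hxS
    obtain ⟨a, ha, b, hb, c, hc, hab, h⟩ :=
      exists_add_eq_add_of_notMem_greedySet_two (mem_Iic.1 hx) hxS
    refine mem_image.2 ⟨((a, b), c), ?_, by dsimp only; omega⟩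
    exact mem_product.2 ⟨mem_filter.2 ⟨mem_product.2 ⟨ha, hb⟩, hab⟩, hc⟩
  have hcard : greedy 2 (m + 1) + 1 ≤ (m + 2) + (m + 1).choose 2 * (m + 1) := calc
    greedy 2 (m + 1) + 1 = #(Iic (greedy 2 (m + 1))) := (Nat.card_Iic _).symm
    _ ≤ #(greedySet 2 (m + 1)) + #(T.image fun t => t.1.2 + t.2 - t.1.1) :=
      (card_le_card hcover).trans (card_union_le _ _)
    _ ≤ (m + 2) + #T := by
      rw [card_greedySet_two]
      exact Nat.add_le_add_left card_image_le _
    _ = (m + 2) + (m + 1).choose 2 * (m + 1) := by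
      rw [card_product, card_product_filter_lt, card_greedySet_two]
  omega

theorem stmt_7_general (k : ℕ) :
    (greedy 2 k : ℚ) ≤ (1 / 2) * (k : ℚ) ^ 3 + (1 / 2) * (k : ℚ) := by
  cases k with
  | zero => simp [greedy_zero]
  | succ m =>
    have h : (greedy 2 (m + 1) : ℚ) ≤ (m + 1) + (m + 1).choose 2 * (m + 1) := by
      exact_mod_cast greedy_two_succ_le m
    rw [Nat.cast_choose_two] at h
    push_cast at h ⊢
    nlinarith

theorem stmt_7 (k : ℕ) (hk : 1 ≤ k) :
    (greedy 2 k : ℚ) ≤ (1 / 2) * (k : ℚ) ^ 3 + (1 / 2) * (k : ℚ) :=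
  stmt_7_general k
end

section
/- For every positive integer h, the third positive element of the greedy B_h-set is γ_3(h) = h^2 + h + 1. -/
-- auxiliary

lemma card_filter_val_lt (h m : ℕ) (hm : m ≤ h) :
    ((Finset.univ : Finset (Fin h)).filter fun i : Fin h => (i : ℕ) < m).card = m := by
  rcases eq_or_lt_of_le hm with rfl | hlt
  · have he : ((Finset.univ : Finset (Fin m)).filter fun i : Fin m => (i : ℕ) < m)
        = Finset.univ := by
      ext i; simp [i.isLt]
    simp [he]
  · have he : ((Finset.univ : Finset (Fin h)).filter fun i : Fin h => (i : ℕ) < m) =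
        Finset.Iio (⟨m, hlt⟩ : Fin h) := by
      ext i; simp [Fin.lt_def]
    rw [he, Fin.card_Iio]

lemma sum_if_lt {h : ℕ} (m u : ℕ) (hm : m ≤ h) :
    ∑ i : Fin h, (if (i : ℕ) < m then u else 0) = m * u := by
  rw [← Finset.sum_filter, Finset.sum_const, card_filter_val_lt h m hm, smul_eq_mul]

def cnt {h : ℕ} (a : Fin h → ℕ) (v : ℕ) : ℕ := (Finset.univ.filter fun i => a i = v).card

lemma sum_eq_sum_cnt {h : ℕ} (A : Finset ℕ) (a : Fin h → ℕ) (ha : ∀ i, a i ∈ A) :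
    ∑ i, a i = ∑ v ∈ A, v * cnt a v := by
  rw [← Finset.sum_fiberwise_of_maps_to (fun i _ => ha i) (fun i => a i)]
  refine Finset.sum_congr rfl fun v hv => ?_
  rw [Finset.sum_congr rfl (fun i hi => (Finset.mem_filter.1 hi).2), Finset.sum_const,
    smul_eq_mul, mul_comm]
  rfl

lemma sum_cnt {h : ℕ} (A : Finset ℕ) (a : Fin h → ℕ) (ha : ∀ i, a i ∈ A) :
    ∑ v ∈ A, cnt a v = h := by
  have := Finset.card_eq_sum_card_fiberwise (t := A) (f := a)
    (s := (Finset.univ : Finset (Fin h))) (fun i _ => ha i)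
  simp only [Finset.card_univ, Fintype.card_fin] at this
  exact this.symm

lemma cnt_eq_zero {h : ℕ} (a : Fin h → ℕ) (A : Finset ℕ) (ha : ∀ i, a i ∈ A) {v : ℕ}
    (hv : v ∉ A) : cnt a v = 0 := by
  rw [cnt, Finset.card_eq_zero, Finset.filter_eq_empty_iff]
  rintro i _ rfl
  exact hv (ha i)

lemma mset_eq_of_cnt {h : ℕ} (a b : Fin h → ℕ) (H : ∀ v, cnt a v = cnt b v) :
    Multiset.map a Finset.univ.val = Multiset.map b Finset.univ.val := by
  ext v
  rw [Multiset.count_map, Multiset.count_map]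
  have key : ∀ f : Fin h → ℕ,
      Multiset.card (Multiset.filter (fun i => v = f i) Finset.univ.val) = cnt f v := by
    intro f
    rw [cnt, Finset.card, Finset.filter_val]
    congr 1
    apply Multiset.filter_congr
    intro i _
    exact eq_comm
  rw [key a, key b, H v]

lemma uniq2 {h c1 c2 d1 d2 : ℕ} (hc : c1 + c2 ≤ h) (hd : d1 + d2 ≤ h)
    (e : c1 + c2 * (h + 1) = d1 + d2 * (h + 1)) : c1 = d1 ∧ c2 = d2 := by
  have h2 : c2 = d2 := by
    rcases lt_trichotomy c2 d2 with hlt | heq | hgt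
    · nlinarith
    · exact heq
    · nlinarith
  subst h2
  omega

lemma uniq3 {h c1 c2 c3 d1 d2 d3 : ℕ} (hc : c1 + c2 + c3 ≤ h) (hd : d1 + d2 + d3 ≤ h)
    (e : c1 + c2 * (h + 1) + c3 * (h ^ 2 + h + 1) = d1 + d2 * (h + 1) + d3 * (h ^ 2 + h + 1)) :
    c1 = d1 ∧ c2 = d2 ∧ c3 = d3 := by
  have hbc : c1 + c2 * (h + 1) ≤ h ^ 2 + h := by nlinarith
  have hbd : d1 + d2 * (h + 1) ≤ h ^ 2 + h := by nlinarith
  have h3 : c3 = d3 := by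
    rcases lt_trichotomy c3 d3 with hlt | heq | hgt
    · nlinarith
    · exact heq
    · nlinarith
  subst h3
  have e2 : c1 + c2 * (h + 1) = d1 + d2 * (h + 1) := by omega
  obtain ⟨h1, h2⟩ := uniq2 (h := h) (by omega) (by omega) e2
  exact ⟨h1, h2, rfl⟩

-- {0,1,h+1} is a B_h-set
lemma bh_two (h : ℕ) (hh : 1 ≤ h) :
    IsBhSet h ((insert (h+1) ({1, 0} : Finset ℕ) : Finset ℕ) : Set ℕ) := by
  set A : Finset ℕ := insert (h+1) ({1, 0} : Finset ℕ) with hA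
  intro a b ha hb hsum
  have ha' : ∀ i, a i ∈ A := fun i => by simpa using ha i
  have hb' : ∀ i, b i ∈ A := fun i => by simpa using hb i
  have hn1 : (h+1 : ℕ) ∉ ({1, 0} : Finset ℕ) := by simp; omega
  have hn2 : (1 : ℕ) ∉ ({0} : Finset ℕ) := by simp
  have hsa := sum_eq_sum_cnt A a ha'
  have hsb := sum_eq_sum_cnt A b hb'
  have hca := sum_cnt A a ha'
  have hcb := sum_cnt A b hb'
  rw [hA] at hsa hsb hca hcb
  rw [Finset.sum_insert hn1, Finset.sum_insert hn2, Finset.sum_singleton] at hsa hsb hca hcb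
  rw [hsa, hsb] at hsum
  obtain ⟨e1, e2⟩ := uniq2 (h := h)
    (c1 := cnt a 1) (c2 := cnt a (h+1)) (d1 := cnt b 1) (d2 := cnt b (h+1))
    (by omega) (by omega) (by ring_nf; ring_nf at hsum; omega)
  apply mset_eq_of_cnt
  intro v
  by_cases hv : v ∈ A
  · rw [hA] at hv
    simp only [Finset.mem_insert, Finset.mem_singleton] at hv
    rcases hv with rfl | rfl | rfl <;> omega
  · rw [cnt_eq_zero a A ha' hv, cnt_eq_zero b A hb' hv]

-- {0,1,h+1,h^2+h+1} is a B_h-set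
lemma bh_three (h : ℕ) (hh : 1 ≤ h) :
    IsBhSet h ((insert (h^2+h+1) (insert (h+1) ({1, 0} : Finset ℕ)) : Finset ℕ) : Set ℕ) := by
  set A : Finset ℕ := insert (h^2+h+1) (insert (h+1) ({1, 0} : Finset ℕ)) with hA
  intro a b ha hb hsum
  have ha' : ∀ i, a i ∈ A := fun i => by simpa using ha i
  have hb' : ∀ i, b i ∈ A := fun i => by simpa using hb i
  have hn0 : (h^2+h+1 : ℕ) ∉ (insert (h+1) ({1, 0} : Finset ℕ)) := by simp; nlinarith
  have hn1 : (h+1 : ℕ) ∉ ({1, 0} : Finset ℕ) := by simp; omega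
  have hn2 : (1 : ℕ) ∉ ({0} : Finset ℕ) := by simp
  have hsa := sum_eq_sum_cnt A a ha'
  have hsb := sum_eq_sum_cnt A b hb'
  have hca := sum_cnt A a ha'
  have hcb := sum_cnt A b hb'
  rw [hA] at hsa hsb hca hcb
  rw [Finset.sum_insert hn0, Finset.sum_insert hn1, Finset.sum_insert hn2,
    Finset.sum_singleton] at hsa hsb hca hcb
  rw [hsa, hsb] at hsum
  obtain ⟨e1, e2, e3⟩ := uniq3 (h := h)
    (c1 := cnt a 1) (c2 := cnt a (h+1)) (c3 := cnt a (h^2+h+1))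
    (d1 := cnt b 1) (d2 := cnt b (h+1)) (d3 := cnt b (h^2+h+1))
    (by omega) (by omega) (by ring_nf; ring_nf at hsum; omega)
  apply mset_eq_of_cnt
  intro v
  by_cases hv : v ∈ A
  · rw [hA] at hv
    simp only [Finset.mem_insert, Finset.mem_singleton] at hv
    rcases hv with rfl | rfl | rfl | rfl <;> omega
  · rw [cnt_eq_zero a A ha' hv, cnt_eq_zero b A hb' hv]

lemma not_bh_two (h s : ℕ) (hs2 : 2 ≤ s) (hsh : s ≤ h) :
    ¬ IsBhSet h ((insert s ({1, 0} : Finset ℕ) : Finset ℕ) : Set ℕ) := by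
  intro H
  set a : Fin h → ℕ := fun i => if (i : ℕ) < 1 then s else 0 with haa
  set b : Fin h → ℕ := fun i => if (i : ℕ) < s then 1 else 0 with hbb
  have ha : ∀ i, a i ∈ ((insert s ({1, 0} : Finset ℕ) : Finset ℕ) : Set ℕ) := by
    intro i; simp only [haa]; split <;> simp
  have hb : ∀ i, b i ∈ ((insert s ({1, 0} : Finset ℕ) : Finset ℕ) : Set ℕ) := by
    intro i; simp only [hbb]; split <;> simp
  have hsum : ∑ i, a i = ∑ i, b i := by
    rw [haa, hbb, sum_if_lt 1 s (by omega), sum_if_lt s 1 hsh]; ring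
  have heq := H a b ha hb hsum
  have hmem : s ∈ Multiset.map a Finset.univ.val :=
    Multiset.mem_map.2 ⟨⟨0, by omega⟩, by simp, by simp [haa]⟩
  rw [heq] at hmem
  obtain ⟨i, _, hi⟩ := Multiset.mem_map.1 hmem
  rw [hbb] at hi
  simp only at hi
  split at hi <;> omega

lemma not_bh_three (h x : ℕ) (hh : 1 ≤ h) (hx1 : h + 1 < x) (hx2 : x ≤ h ^ 2 + h) :
    ¬ IsBhSet h ((insert x (insert (h+1) ({1, 0} : Finset ℕ)) : Finset ℕ) : Set ℕ) := by
  intro H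
  set A : Finset ℕ := insert x (insert (h+1) ({1, 0} : Finset ℕ)) with hA
  set q := x / (h + 1) with hq
  set r := x % (h + 1) with hr
  have hqr : q * (h + 1) + r = x := by rw [hq, hr, mul_comm]; exact Nat.div_add_mod x (h + 1)
  have hrlt : r < h + 1 := Nat.mod_lt _ (by omega)
  have hqle : q ≤ h := by
    rw [hq]
    calc x / (h + 1) ≤ (h * (h + 1)) / (h + 1) := Nat.div_le_div_right (by nlinarith)
      _ = h := Nat.mul_div_cancel _ (by omega)
  by_cases hcase : q + r ≤ h
  · set a : Fin h → ℕ := fun i => if (i : ℕ) < 1 then x else 0 with haa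
    set b : Fin h → ℕ := fun i =>
      (if (i : ℕ) < q + r then 1 else 0) + (if (i : ℕ) < q then h else 0) with hbb
    have ha : ∀ i, a i ∈ (A : Set ℕ) := by
      intro i; rw [haa, hA]; simp only; split <;> simp
    have hb : ∀ i, b i ∈ (A : Set ℕ) := by
      intro i
      have : b i = h + 1 ∨ b i = 1 ∨ b i = 0 := by
        rw [hbb]; simp only; split <;> split <;> omega
      rw [hA]; rcases this with h' | h' | h' <;> rw [h'] <;> simp
    have hsum : ∑ i, a i = ∑ i, b i := by
      rw [haa, hbb]
      simp only []
      rw [Finset.sum_add_distrib, sum_if_lt 1 x (by omega),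
        sum_if_lt (q + r) 1 hcase, sum_if_lt q h (by omega)]
      have hexp : q * (h + 1) = q * h + q := by ring
      omega
    have heq := H a b ha hb hsum
    have hmem : x ∈ Multiset.map a Finset.univ.val :=
      Multiset.mem_map.2 ⟨⟨0, by omega⟩, by simp, by simp [haa]⟩
    rw [heq] at hmem
    obtain ⟨i, _, hi⟩ := Multiset.mem_map.1 hmem
    rw [hbb] at hi
    simp only at hi
    split at hi <;> split at hi <;> omega
  · -- q ≤ h - 1 and r ≥ 2
    have hqlt : q < h := by
      rcases Nat.lt_or_ge q h with h' | h'
      · exact h'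
      · exfalso
        have hqh : q = h := le_antisymm hqle h'
        rw [hqh] at hqr
        have hexp : h * (h + 1) = h ^ 2 + h := by ring
        omega
    have hr2 : 2 ≤ r := by omega
    set a : Fin h → ℕ := fun i =>
      (if (i : ℕ) < 1 then x - 1 else 0) + (if (i : ℕ) < h + 2 - r then 1 else 0) with haa
    set b : Fin h → ℕ := fun i => if (i : ℕ) < q + 1 then h + 1 else 0 with hbb
    have ha : ∀ i, a i ∈ (A : Set ℕ) := by
      intro i
      have : a i = x ∨ a i = 1 ∨ a i = 0 := by
        rw [haa]; simp only; split <;> split <;> omega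
      rw [hA]; rcases this with h' | h' | h' <;> rw [h'] <;> simp
    have hb : ∀ i, b i ∈ (A : Set ℕ) := by
      intro i; rw [hbb, hA]; simp only; split <;> simp
    have hsum : ∑ i, a i = ∑ i, b i := by
      rw [haa, hbb]
      simp only []
      rw [Finset.sum_add_distrib, sum_if_lt 1 (x - 1) (by omega),
        sum_if_lt (h + 2 - r) 1 (by omega), sum_if_lt (q + 1) (h + 1) (by omega)]
      have hexp : (q + 1) * (h + 1) = q * (h + 1) + h + 1 := by ring
      omega
    have heq := H a b ha hb hsum
    have ha0 : a ⟨0, by omega⟩ = x := by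
      rw [haa]
      show (if (0:ℕ) < 1 then x - 1 else 0) + (if (0:ℕ) < h + 2 - r then 1 else 0) = x
      rw [if_pos (by omega), if_pos (by omega)]
      omega
    have hmem : x ∈ Multiset.map a Finset.univ.val :=
      Multiset.mem_map.2 ⟨⟨0, by omega⟩, by simp, ha0⟩
    rw [heq] at hmem
    obtain ⟨i, _, hi⟩ := Multiset.mem_map.1 hmem
    rw [hbb] at hi
    simp only at hi
    split at hi <;> omega

lemma gamma2 (h : ℕ) (hh : 1 ≤ h) :
    sInf {x : ℕ | 1 < x ∧ IsBhSet h ((insert x ({1, 0} : Finset ℕ) : Finset ℕ) : Set ℕ)}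
      = h + 1 := by
  have hmem : h + 1 ∈ {x : ℕ | 1 < x ∧
      IsBhSet h ((insert x ({1, 0} : Finset ℕ) : Finset ℕ) : Set ℕ)} :=
    ⟨by omega, bh_two h hh⟩
  refine le_antisymm (Nat.sInf_le hmem) (le_csInf ⟨_, hmem⟩ ?_)
  intro x hx
  obtain ⟨hx1, hx2⟩ := hx
  by_contra hlt
  push_neg at hlt
  exact not_bh_two h x (by omega) (by omega) hx2

lemma gamma3 (h : ℕ) (hh : 1 ≤ h) :
    sInf {x : ℕ | h + 1 < x ∧
      IsBhSet h ((insert x (insert (h+1) ({1, 0} : Finset ℕ)) : Finset ℕ) : Set ℕ)}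
      = h ^ 2 + h + 1 := by
  have hmem : h ^ 2 + h + 1 ∈ {x : ℕ | h + 1 < x ∧
      IsBhSet h ((insert x (insert (h+1) ({1, 0} : Finset ℕ)) : Finset ℕ) : Set ℕ)} :=
    ⟨by nlinarith, bh_three h hh⟩
  refine le_antisymm (Nat.sInf_le hmem) (le_csInf ⟨_, hmem⟩ ?_)
  intro x hx
  obtain ⟨hx1, hx2⟩ := hx
  by_contra hlt
  push_neg at hlt
  exact not_bh_three h x hh hx1 (by omega) hx2

lemma greedyAux_one (h : ℕ) : greedyAux h 1 = (1, ({1, 0} : Finset ℕ)) := by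
  rw [show (1 : ℕ) = 0 + 1 from rfl, greedyAux]
  simp [greedyAux]

lemma greedyAux_two (h : ℕ) (hh : 1 ≤ h) :
    greedyAux h 2 = (h + 1, (insert (h+1) ({1, 0} : Finset ℕ))) := by
  rw [show (2 : ℕ) = 1 + 1 from rfl, greedyAux, greedyAux_one]
  simp only [if_neg (by omega : ¬ (1 : ℕ) = 0)]
  rw [gamma2 h hh]

theorem stmt_11 (h : ℕ) (hh : 1 ≤ h) :
    greedy h 3 = h ^ 2 + h + 1 := by
  rw [greedy, show (3 : ℕ) = 2 + 1 from rfl, greedyAux, greedyAux_two h hh]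
  simp only [if_neg (by omega : ¬ (2 : ℕ) = 0)]
  exact gamma3 h hh
end

section
/- Fix a positive integer h and a positive integer k, and let γ_0(h), γ_1(h), ... be the greedy B_h-set. For 1 ≤ r ≤ h define F_r^{(k)} as the set of rational numbers (1/r)·Σ_{i=1}^{k} γ_i(h)·(m_i − m'_i), where the m_i and m'_i range over nonnegative integers with Σ_{i=1}^{k} m_i ≤ h and Σ_{i=1}^{k} m'_i ≤ h − r, and let F^{(k)} = ∪_{r=1}^{h} F_r^{(k)}. Then γ_{k+1}(h) equals the smallest nonnegative integer not belonging to F^{(k)}. -/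
/-!
Write `A_k = {0, γ_1, …, γ_k}`. Since `0 ∈ A_k`, for `x ∉ A_k` a multiset of `h` elements of
`A_k ∪ {x}` amounts to multiplicities `mᵢ` of the `γᵢ` and `a` of `x` with `∑ mᵢ + a ≤ h`, so
`A_k ∪ {x}` is a `B_h`-set iff the sums `∑ mᵢ γᵢ + a x` are distinct. When `A_k` is a `B_h`-set,
two equal such sums must give `x` different multiplicities `a > b`, and cancelling yields
`(a - b) x = ∑ γᵢ (mᵢ - m'ᵢ)` with exactly the bounds defining `F^{(k)}`: so `A_k ∪ {x}` is a
`B_h`-set iff `x ∉ F^{(k)}`. Nothing above `h γ_k` lies in `F^{(k)}`, so the greedy choice exists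
and `γ_{k+1}` is the least `x > γ_k` outside `F^{(k)}`. A smaller `x` lies in `F^{(k)}`: either
`x ∈ A_k`, or `γ_j < x < γ_{j+1}` for some `j`, and `x` was rejected at step `j`, so no superset
of `A_j ∪ {x}` is a `B_h`-set.
-/
open Finset Function

namespace GreedyBh

variable {h : ℕ}

lemma exists_map_univ_eq_of_card_eq {α : Type*} {s : Multiset α} (hs : Multiset.card s = h) :
    ∃ a : Fin h → α, Multiset.map a univ.val = s := by
  subst hs
  refine ⟨fun i => s.toList.get (i.cast (Multiset.length_toList s).symm), ?_⟩
  rw [Fin.univ_val_map, ← List.ofFn_congr (Multiset.length_toList s), List.ofFn_get,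
    Multiset.coe_toList]

lemma isBhSet_iff_injOn_sum {A : Set ℕ} :
    IsBhSet h A ↔ Set.InjOn Multiset.sum {s | Multiset.card s = h ∧ ∀ x ∈ s, x ∈ A} := by
  constructor
  · rintro hA s ⟨hs, hsA⟩ t ⟨ht, htA⟩ hst
    obtain ⟨a, rfl⟩ := exists_map_univ_eq_of_card_eq hs
    obtain ⟨b, rfl⟩ := exists_map_univ_eq_of_card_eq ht
    simp only [Multiset.mem_map, Finset.mem_univ_val, true_and, forall_exists_index,
      forall_apply_eq_imp_iff] at hsA htA
    exact hA a b hsA htA hst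
  · intro hA a b ha hb hab
    exact hA ⟨by simp, by simpa using ha⟩ ⟨by simp, by simpa using hb⟩ hab

lemma IsBhSet.mono {A B : Set ℕ} (hAB : A ⊆ B) (hB : IsBhSet h B) : IsBhSet h A :=
  fun a b ha hb => hB a b (fun i => hAB (ha i)) (fun i => hAB (hb i))

section Coefficients

variable {ι : Type*} [Fintype ι] {g : ι → ℕ}

def HasDistinctSums (h : ℕ) (g : ι → ℕ) : Prop :=
  Set.InjOn (fun m : ι → ℕ => ∑ i, m i * g i) {m | ∑ i, m i ≤ h}

/-- The naturals of the set `F` of the statement, with `r x = ∑ gᵢ (mᵢ - m'ᵢ)` written without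
denominators and subtractions. -/
def obstructionSet (h : ℕ) (g : ι → ℕ) : Set ℕ :=
  {x | ∃ r, 1 ≤ r ∧ r ≤ h ∧ ∃ m m' : ι → ℕ, ∑ i, m i ≤ h ∧ ∑ i, m' i ≤ h - r ∧
    r * x + ∑ i, m' i * g i = ∑ i, m i * g i}

lemma mem_obstructionSet_iff_rat {x : ℕ} : x ∈ obstructionSet h g ↔
    ∃ r : ℕ, 1 ≤ r ∧ r ≤ h ∧ ∃ m m' : ι → ℕ, ∑ i, m i ≤ h ∧ ∑ i, m' i ≤ h - r ∧
      (x : ℚ) = 1 / (r : ℚ) * ∑ i, (g i : ℚ) * ((m i : ℚ) - (m' i : ℚ)) := by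
  refine exists_congr fun r => and_congr_right fun hr => and_congr_right fun _ =>
    exists₂_congr fun m m' => and_congr_right fun _ => and_congr_right fun _ => ?_
  have hr0 : (r : ℚ) ≠ 0 := by exact_mod_cast (by omega : r ≠ 0)
  have hsum : ∑ i, (g i : ℚ) * ((m i : ℚ) - (m' i : ℚ)) =
      ∑ i, (m i : ℚ) * g i - ∑ i, (m' i : ℚ) * g i := by
    rw [← sum_sub_distrib]
    exact sum_congr rfl fun i _ => by ring
  rw [← @Nat.cast_inj ℚ, one_div, eq_inv_mul_iff_mul_eq₀ hr0, hsum]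
  push_cast
  constructor <;> intro <;> linarith

noncomputable def paddedMultiset (h : ℕ) (g : ι → ℕ) (m : ι → ℕ) : Multiset ℕ :=
  ∑ i, Multiset.replicate (m i) (g i) + Multiset.replicate (h - ∑ i, m i) 0

lemma card_paddedMultiset {m : ι → ℕ} (hm : ∑ i, m i ≤ h) :
    Multiset.card (paddedMultiset h g m) = h := by
  simp [paddedMultiset, Multiset.card_sum]
  omega

lemma sum_paddedMultiset (m : ι → ℕ) :
    (paddedMultiset h g m).sum = ∑ i, m i * g i := by
  simp [paddedMultiset, Multiset.sum_sum]

lemma count_paddedMultiset (hg : Injective g) (hg0 : ∀ i, g i ≠ 0) (m : ι → ℕ) (j : ι) :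
    (paddedMultiset h g m).count (g j) = m j := by
  classical
  simp [paddedMultiset, Multiset.count_sum', Multiset.count_replicate, hg.eq_iff, (hg0 j).symm]

lemma card_eq_count_zero_add_sum_count (hg : Injective g) (hg0 : ∀ i, g i ≠ 0) {s : Multiset ℕ}
    (hs : ∀ x ∈ s, x ∈ insert 0 (Set.range g)) :
    Multiset.card s = s.count 0 + ∑ i, s.count (g i) := by
  classical
  have h0 : 0 ∉ univ.image g := by simpa using hg0
  rw [← Multiset.sum_count_eq_card (s := insert 0 (univ.image g)) (by simpa using hs),
    sum_insert h0, sum_image hg.injOn]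

lemma count_zero_paddedMultiset (hg0 : ∀ i, g i ≠ 0) (m : ι → ℕ) :
    (paddedMultiset h g m).count 0 = h - ∑ i, m i := by
  simp [paddedMultiset, Multiset.count_sum', Multiset.count_replicate, hg0]

lemma mem_paddedMultiset {m : ι → ℕ} {x : ℕ} (hx : x ∈ paddedMultiset h g m) :
    x ∈ insert 0 (Set.range g) := by
  simp only [paddedMultiset, Multiset.mem_add, Multiset.mem_sum, Finset.mem_univ, true_and] at hx
  rcases hx with ⟨i, hi⟩ | hx
  · exact Or.inr ⟨i, (Multiset.eq_of_mem_replicate hi).symm⟩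
  · exact Or.inl (Multiset.eq_of_mem_replicate hx)

theorem isBhSet_insert_zero_range_iff (hg : Injective g) (hg0 : ∀ i, g i ≠ 0) :
    IsBhSet h (insert 0 (Set.range g)) ↔ HasDistinctSums h g := by
  set S := {s : Multiset ℕ | Multiset.card s = h ∧ ∀ x ∈ s, x ∈ insert 0 (Set.range g)}
  have hmaps : Set.MapsTo (paddedMultiset h g) {m | ∑ i, m i ≤ h} S :=
    fun m hm => ⟨card_paddedMultiset hm, fun _ => mem_paddedMultiset⟩
  have hinj : Set.InjOn (paddedMultiset h g) {m | ∑ i, m i ≤ h} := fun m _ m' _ hmm' =>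
    funext fun j => by rw [← count_paddedMultiset hg hg0 m j, hmm', count_paddedMultiset hg hg0]
  have hsurj : S ⊆ paddedMultiset h g '' {m | ∑ i, m i ≤ h} := by
    rintro s ⟨hcard, hs⟩
    have hcount := card_eq_count_zero_add_sum_count hg hg0 hs
    refine ⟨fun i => s.count (g i), show ∑ i, s.count (g i) ≤ h by omega, ?_⟩
    ext x
    by_cases hx : x ∈ insert 0 (Set.range g)
    · rcases hx with rfl | ⟨j, rfl⟩
      · rw [count_zero_paddedMultiset hg0]; omega
      · exact count_paddedMultiset hg hg0 _ j
    · rw [Multiset.count_eq_zero.mpr fun hmem => hx (mem_paddedMultiset hmem),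
        Multiset.count_eq_zero.mpr fun hmem => hx (hs x hmem)]
  have hcomp : Multiset.sum ∘ paddedMultiset h g = fun m : ι → ℕ => ∑ i, m i * g i :=
    funext sum_paddedMultiset
  rw [isBhSet_iff_injOn_sum, HasDistinctSums, ← hcomp]
  exact ⟨fun H => H.comp hinj hmaps, fun H => H.image_of_comp.mono hsurj⟩

end Coefficients

section Snoc

variable {k : ℕ} {g : Fin k → ℕ} {x : ℕ}

lemma hasDistinctSums_snoc_iff (hg : HasDistinctSums h g) :
    HasDistinctSums h (Fin.snoc g x : Fin (k + 1) → ℕ) ↔ x ∉ obstructionSet h g := by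
  constructor
  · rintro hd ⟨r, hr, hrh, m, m', hm, hm', hmm'⟩
    have := @hd (Fin.snoc m' r) (by simp [Fin.sum_univ_castSucc]; omega) (Fin.snoc m 0)
      (by simpa [Fin.sum_univ_castSucc] using hm) (by simp [Fin.sum_univ_castSucc]; omega)
    have hr0 := congrFun this (Fin.last k)
    simp only [Fin.snoc_last] at hr0
    omega
  · intro hx M hM M' hM' hMM'
    obtain ⟨m, a, rfl⟩ : ∃ m a, M = Fin.snoc m a := ⟨_, _, (Fin.snoc_init_self M).symm⟩
    obtain ⟨m', a', rfl⟩ : ∃ m a, M' = Fin.snoc m a := ⟨_, _, (Fin.snoc_init_self M').symm⟩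
    simp only [Set.mem_ofPred_eq, Fin.sum_univ_castSucc, Fin.snoc_castSucc, Fin.snoc_last]
      at hM hM' hMM'
    wlog ha : a' ≤ a generalizing m a m' a'
    · exact (this m' a' m a hM' hM hMM'.symm (by omega)).symm
    obtain ⟨r, rfl⟩ := Nat.exists_eq_add_of_le ha
    rcases Nat.eq_zero_or_pos r with rfl | hr
    · rw [hg (show ∑ i, m i ≤ h by omega) (show ∑ i, m' i ≤ h by omega) (by simpa using hMM'),
        add_zero]
    · refine absurd ⟨r, hr, by omega, m', m, by omega, by omega, ?_⟩ hx
      rw [add_mul] at hMM'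
      omega

lemma hasDistinctSums_snoc_of_lt {B : ℕ} (hg : HasDistinctSums h g) (hB : ∀ i, g i ≤ B)
    (hx : h * B < x) : HasDistinctSums h (Fin.snoc g x : Fin (k + 1) → ℕ) := by
  refine (hasDistinctSums_snoc_iff hg).2 fun ⟨r, hr, _, m, m', hm, _, hmm'⟩ => ?_
  have : ∑ i, m i * g i < r * x :=
    calc ∑ i, m i * g i ≤ ∑ i, m i * B := sum_le_sum fun i _ => Nat.mul_le_mul_left _ (hB i)
      _ = (∑ i, m i) * B := (sum_mul ..).symm
      _ ≤ h * B := Nat.mul_le_mul_right B hm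
      _ < x := hx
      _ ≤ r * x := Nat.le_mul_of_pos_left x hr
  omega

end Snoc

variable {k : ℕ}

noncomputable def greedyVec (h k : ℕ) : Fin k → ℕ := fun i => greedy h (i.1 + 1)

lemma greedy_zero : greedy h 0 = 0 := rfl

lemma greedy_one : greedy h 1 = 1 := rfl

lemma greedy_succ (hk : k ≠ 0) :
    greedy h (k + 1) = sInf {x | greedy h k < x ∧
      IsBhSet h ↑(insert x (greedyAux h k).2)} := by
  simp [greedy, greedyAux, hk]

lemma greedyVec_succ : greedyVec h (k + 1) = Fin.snoc (greedyVec h k) (greedy h (k + 1)) := by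
  ext i
  induction i using Fin.lastCases <;> simp [greedyVec]

lemma coe_greedyAux_snd : ((greedyAux h k).2 : Set ℕ) = insert 0 (Set.range (greedyVec h k)) := by
  induction k with
  | zero => simp [greedyAux]
  | succ k ih =>
    rw [greedyVec_succ, Fin.range_snoc, Set.insert_comm, ← ih]
    simp [greedyAux, greedy]

lemma greedyAux_snd_mono : Monotone fun k => (greedyAux h k).2 :=
  monotone_nat_of_le_succ fun _ => Finset.subset_insert _ _

lemma zero_mem_greedyAux_snd : 0 ∈ (greedyAux h k).2 := by
  rw [← Finset.mem_coe, coe_greedyAux_snd]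
  exact Set.mem_insert _ _

lemma greedy_mem_greedyAux_snd : greedy h k ∈ (greedyAux h k).2 := by
  cases k with
  | zero => exact zero_mem_greedyAux_snd
  | succ k => exact Finset.mem_insert_self _ _

section StrictMonoOn

variable (hmono : StrictMonoOn (greedy h) (Set.Iic k))
include hmono

lemma injective_greedyVec : Injective (greedyVec h k) := fun i j hij =>
  Fin.ext <| Nat.succ_injective <| hmono.injOn (by simp [Nat.succ_le_of_lt i.2])
    (by simp [Nat.succ_le_of_lt j.2]) hij

lemma greedyVec_ne_zero (i : Fin k) : greedyVec h k i ≠ 0 :=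
  (greedy_zero (h := h) ▸ hmono (by simp) (by simp [Nat.succ_le_of_lt i.2])
    (Nat.succ_pos i)).ne'

lemma le_greedy_of_mem {y : ℕ} (hy : y ∈ (greedyAux h k).2) : y ≤ greedy h k := by
  rw [← Finset.mem_coe, coe_greedyAux_snd] at hy
  rcases hy with rfl | ⟨i, rfl⟩
  · exact Nat.zero_le _
  · exact hmono.monotoneOn (by simp [Nat.succ_le_of_lt i.2]) (by simp) (Nat.succ_le_of_lt i.2)

lemma isBhSet_insert_greedyAux_iff {x : ℕ} (hx : x ∉ (greedyAux h k).2) :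
    IsBhSet h ↑(insert x (greedyAux h k).2) ↔
      HasDistinctSums h (Fin.snoc (greedyVec h k) x : Fin (k + 1) → ℕ) := by
  rw [Finset.coe_insert, coe_greedyAux_snd, Set.insert_comm, ← Fin.range_snoc]
  refine isBhSet_insert_zero_range_iff ?_ fun i => ?_
  · refine Fin.snoc_injective_of_injective (injective_greedyVec hmono) fun ⟨i, hi⟩ => hx ?_
    rw [← hi, ← Finset.mem_coe, coe_greedyAux_snd]
    exact Set.mem_insert_of_mem _ ⟨i, rfl⟩
  · induction i using Fin.lastCases with
    | last =>
      rw [Fin.snoc_last]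
      rintro rfl
      exact hx zero_mem_greedyAux_snd
    | cast i => simpa using greedyVec_ne_zero hmono i

lemma greedy_lt_succ_and_hasDistinctSums (hh : 1 ≤ h) (hd : HasDistinctSums h (greedyVec h k)) :
    greedy h k < greedy h (k + 1) ∧ HasDistinctSums h (greedyVec h (k + 1)) := by
  have hbig : ∀ x, h * greedy h k < x →
      HasDistinctSums h (Fin.snoc (greedyVec h k) x : Fin (k + 1) → ℕ) := fun x =>
    hasDistinctSums_snoc_of_lt hd fun i =>
      le_greedy_of_mem hmono (by rw [← Finset.mem_coe, coe_greedyAux_snd]; exact Or.inr ⟨i, rfl⟩)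
  have hnot_mem : ∀ x, greedy h k < x → x ∉ (greedyAux h k).2 := fun x hx hmem =>
    (le_greedy_of_mem hmono hmem).not_gt hx
  rcases Nat.eq_zero_or_pos k with rfl | hk
  · exact ⟨zero_lt_one, greedyVec_succ ▸ hbig 1 (by simp [greedy_zero])⟩
  · have hx : greedy h k < h * greedy h k + 1 := Nat.lt_succ_of_le (Nat.le_mul_of_pos_left _ hh)
    have hmem := Nat.sInf_mem
      (s := {x | greedy h k < x ∧ IsBhSet h ↑(insert x (greedyAux h k).2)}) ⟨_, hx,
        (isBhSet_insert_greedyAux_iff hmono (hnot_mem _ hx)).2 (hbig _ (Nat.lt_succ_self _))⟩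
    rw [← greedy_succ hk.ne'] at hmem
    obtain ⟨hlt, hB⟩ := hmem
    exact ⟨hlt, greedyVec_succ ▸ (isBhSet_insert_greedyAux_iff hmono (hnot_mem _ hlt)).1 hB⟩

end StrictMonoOn

lemma strictMonoOn_greedy_and_hasDistinctSums (hh : 1 ≤ h) :
    ∀ k, StrictMonoOn (greedy h) (Set.Iic k) ∧ HasDistinctSums h (greedyVec h k)
  | 0 => ⟨(Set.subsingleton_of_forall_eq 0 fun _ => Nat.le_zero.1).strictMonoOn _,
      fun m _ m' _ _ => Subsingleton.elim m m'⟩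
  | k + 1 =>
    have ⟨hmono, hd⟩ := strictMonoOn_greedy_and_hasDistinctSums hh k
    have ⟨hlt, hd'⟩ := greedy_lt_succ_and_hasDistinctSums hmono hh hd
    ⟨strictMonoOn_Iic_of_lt_succ fun j hj => by
      rcases Nat.lt_succ_iff_lt_or_eq.1 hj with hj | rfl
      · exact hmono (Set.mem_Iic.2 hj.le) (Set.mem_Iic.2 hj) (Order.lt_succ j)
      · exact hlt, hd'⟩

lemma not_isBhSet_insert_of_lt_greedy {n : ℕ} (hn : n ∉ (greedyAux h k).2)
    (hlt : n < greedy h (k + 1)) : ¬ IsBhSet h ↑(insert n (greedyAux h k).2) := by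
  induction k with
  | zero =>
    obtain rfl : n = 0 := by simpa [greedy_one] using hlt
    exact absurd zero_mem_greedyAux_snd hn
  | succ k ih =>
    have hnk : n ∉ (greedyAux h k).2 := fun hmem => hn (greedyAux_snd_mono k.le_succ hmem)
    rcases lt_or_gt_of_ne (ne_of_mem_of_not_mem greedy_mem_greedyAux_snd hn) with hgt | hgt
    · rw [greedy_succ k.succ_ne_zero] at hlt
      exact fun hB => Nat.notMem_of_lt_sInf hlt ⟨hgt, hB⟩
    · refine fun hB => ih hnk hgt (IsBhSet.mono ?_ hB)
      exact Finset.coe_subset.2 (insert_subset_insert _ (greedyAux_snd_mono k.le_succ))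

theorem greedy_succ_not_mem_obstructionSet (hh : 1 ≤ h) (k : ℕ) :
    greedy h (k + 1) ∉ obstructionSet h (greedyVec h k) :=
  (hasDistinctSums_snoc_iff (strictMonoOn_greedy_and_hasDistinctSums hh k).2).1
    (greedyVec_succ ▸ (strictMonoOn_greedy_and_hasDistinctSums hh (k + 1)).2)

theorem mem_obstructionSet_of_lt_greedy (hh : 1 ≤ h) {n : ℕ} (hn : n < greedy h (k + 1)) :
    n ∈ obstructionSet h (greedyVec h k) := by
  by_cases hmem : n ∈ (greedyAux h k).2
  · rw [← Finset.mem_coe, coe_greedyAux_snd] at hmem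
    rcases hmem with rfl | ⟨i, rfl⟩
    · exact ⟨1, le_rfl, hh, 0, 0, by simp, by simp, by simp⟩
    · exact ⟨1, le_rfl, hh, Pi.single i 1, 0, by simpa using hh, by simp,
        by simp [Pi.single_apply]⟩
  · have ⟨hmono, hd⟩ := strictMonoOn_greedy_and_hasDistinctSums hh k
    by_contra hobs
    exact not_isBhSet_insert_of_lt_greedy hmem hn
      ((isBhSet_insert_greedyAux_iff hmono hmem).2 ((hasDistinctSums_snoc_iff hd).2 hobs))

end GreedyBh

open GreedyBh in
theorem stmt_18_general (h k : ℕ) (hh : 1 ≤ h) :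
    greedy h (k + 1) = sInf {n : ℕ |
      ¬ ∃ r : ℕ, 1 ≤ r ∧ r ≤ h ∧ ∃ m m' : Fin k → ℕ,
        (∑ i, m i) ≤ h ∧ (∑ i, m' i) ≤ h - r ∧
        (n : ℚ) = (1 / (r : ℚ)) *
          ∑ i : Fin k, (greedy h (i.1 + 1) : ℚ) * ((m i : ℚ) - (m' i : ℚ))} := by
  simp only [← mem_obstructionSet_iff_rat]
  exact (IsLeast.csInf_eq ⟨greedy_succ_not_mem_obstructionSet hh k,
    fun n hn => not_lt.1 fun hlt => absurd (mem_obstructionSet_of_lt_greedy hh hlt) hn⟩).symm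

theorem stmt_18 (h k : ℕ) (hh : 1 ≤ h) (hk : 1 ≤ k) :
    greedy h (k + 1) = sInf {n : ℕ |
      ¬ ∃ r : ℕ, 1 ≤ r ∧ r ≤ h ∧ ∃ m m' : Fin k → ℕ,
        (∑ i, m i) ≤ h ∧ (∑ i, m' i) ≤ h - r ∧
        (n : ℚ) = (1 / (r : ℚ)) *
          ∑ i : Fin k, (greedy h (i.1 + 1) : ℚ) * ((m i : ℚ) - (m' i : ℚ))} :=
  stmt_18_general h k hh
end
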